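/- arXiv:1303.2435 — 9 statements merged into one kernel-verified Lean document; each statement's English description precedes it below -/
import Mathlib

section
/- Let $X$ be a topological space and $k$ a non-Archimedean valued field with non-trivial valuation. A subset $F \subset X$ is a countable intersection of clopen subsets of $X$ if and only if there exists a bounded continuous function $f \colon X \to k$ with $F = f^{-1}(\{0\})$. -/
/-!
Write a $\mathrm{CO}_\delta$-set as $F = \bigcap_n V_n$ with $V_n$ clopen and pick $a \in k$ with
$0 < |a| < 1$. Sending $x$ to $a^n$, where $n$ is the first index with $x \notin V_n$, and the
points of $F$ to $0$, gives a function bounded by $1$ with zero set $F$. It is locally constant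
off $F$, and near a point of $F$ it takes values in $\{0\} \cup \{a^m : m \ge N\}$ on the
neighbourhood $\bigcap_{i < N} V_i$, hence it is continuous. Conversely, in an ultrametric space
every ball is clopen, so $\{0\} = \bigcap_n B(0, 1/(n+1))$ and its preimage under a continuous map
are $\mathrm{CO}_\delta$-sets.
-/

open Set Filter Topology

section COδ

variable {X Y : Type*} [TopologicalSpace X]

def IsCOδ (s : Set X) : Prop :=
  ∃ 𝒰 : Set (Set X), 𝒰.Countable ∧ (∀ V ∈ 𝒰, IsClopen V) ∧ s = ⋂₀ 𝒰

theorem isCOδ_iff_exists_iInter {s : Set X} :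
    IsCOδ s ↔ ∃ V : ℕ → Set X, (∀ n, IsClopen (V n)) ∧ s = ⋂ n, V n := by
  constructor
  · rintro ⟨𝒰, h𝒰, hclopen, rfl⟩
    -- adding `univ` makes the family nonempty without changing its intersection
    obtain ⟨V, hV⟩ := (h𝒰.insert univ).exists_eq_range (insert_nonempty _ _)
    refine ⟨V, fun n => ?_, ?_⟩
    · rcases (hV ▸ mem_range_self n : V n ∈ insert univ 𝒰) with h | h
      · exact h ▸ isClopen_univ
      · exact hclopen _ h
    · rw [← sInter_range, ← hV, sInter_insert, univ_inter]
  · rintro ⟨V, hV, rfl⟩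
    exact ⟨range V, countable_range V, forall_mem_range.2 hV, (sInter_range V).symm⟩

theorem IsCOδ.preimage [TopologicalSpace Y] {s : Set Y} (hs : IsCOδ s) {f : X → Y}
    (hf : Continuous f) : IsCOδ (f ⁻¹' s) := by
  obtain ⟨V, hV, rfl⟩ := isCOδ_iff_exists_iInter.1 hs
  rw [preimage_iInter]
  exact isCOδ_iff_exists_iInter.2 ⟨_, fun n => (hV n).preimage hf, rfl⟩

theorem IsUltrametricDist.isCOδ_singleton [MetricSpace Y] [IsUltrametricDist Y] (y : Y) :
    IsCOδ {y} := by
  refine isCOδ_iff_exists_iInter.2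
    ⟨fun n : ℕ => Metric.ball y (1 / (n + 1)), fun n => IsUltrametricDist.isClopen_ball _ _, ?_⟩
  simpa using (biInter_basis_nhds Metric.nhds_basis_ball_inv_nat_succ).symm

end COδ

section FirstExit

variable {X Y : Type*}

open Classical in
noncomputable def firstExitValue (V : ℕ → Set X) (c : ℕ → Y) (y : Y) (x : X) : Y :=
  if h : ∃ n, x ∉ V n then c (Nat.find h) else y

variable {V : ℕ → Set X} {c : ℕ → Y} {y : Y} {x : X}

theorem firstExitValue_eq_of_mem {m : ℕ} (hlt : x ∈ ⋂ i < m, V i) (hm : x ∉ V m) :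
    firstExitValue V c y x = c m := by
  classical
  have hx : ∃ n, x ∉ V n := ⟨m, hm⟩
  rw [firstExitValue, dif_pos hx,
    (Nat.find_eq_iff hx).2 ⟨hm, fun i hi => not_not.2 (mem_iInter₂.1 hlt i hi)⟩]

theorem firstExitValue_eq_or_exists_ge {N : ℕ} (hx : x ∈ ⋂ i < N, V i) :
    firstExitValue V c y x = y ∨ ∃ n ≥ N, firstExitValue V c y x = c n := by
  classical
  unfold firstExitValue
  split_ifs with h
  · exact .inr ⟨_, (Nat.le_find_iff h N).2 fun i hi => not_not.2 (mem_iInter₂.1 hx i hi), rfl⟩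
  · exact .inl rfl

theorem preimage_firstExitValue (hc : ∀ n, c n ≠ y) :
    firstExitValue V c y ⁻¹' {y} = ⋂ n, V n := by
  ext x
  simp only [mem_preimage, mem_singleton_iff, mem_iInter, firstExitValue]
  split_ifs with h
  · simpa [hc] using h
  · simpa using h

theorem continuous_firstExitValue [TopologicalSpace X] [TopologicalSpace Y]
    (hV : ∀ n, IsClopen (V n)) (hc : Tendsto c atTop (𝓝 y)) :
    Continuous (firstExitValue V c y) := by
  classical
  have hopen (N : ℕ) : IsOpen (⋂ i < N, V i) :=
    (finite_lt_nat N).isOpen_biInter fun i _ => (hV i).isOpen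
  refine continuous_iff_continuousAt.2 fun x => ?_
  by_cases hx : ∃ n, x ∉ V n
  · set m := Nat.find hx
    have hnhds : (⋂ i < m, V i) ∩ (V m)ᶜ ∈ 𝓝 x :=
      ((hopen m).inter (hV m).isClosed.isOpen_compl).mem_nhds
        ⟨mem_iInter₂.2 fun i hi => not_not.1 (Nat.find_min hx hi), Nat.find_spec hx⟩
    exact continuousAt_const.congr <| eventuallyEq_of_mem hnhds fun z hz =>
      (firstExitValue_eq_of_mem hz.1 hz.2).symm
  · have hxV : x ∈ ⋂ n, V n := mem_iInter.2 (not_exists_not.1 hx)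
    rw [ContinuousAt, show firstExitValue V c y x = y from dif_neg hx]
    intro U hU
    obtain ⟨N, hN⟩ := eventually_atTop.1 (hc hU)
    refine mem_map.2 <| mem_of_superset
      ((hopen N).mem_nhds (mem_iInter₂.2 fun i _ => mem_iInter.1 hxV i)) fun z hz => ?_
    rcases firstExitValue_eq_or_exists_ge (c := c) (y := y) hz with h | ⟨n, hn, h⟩
    · rw [mem_preimage, h]
      exact mem_of_mem_nhds hU
    · rw [mem_preimage, h]
      exact hN n hn

end FirstExit

theorem stmt_1_general {X k : Type*} [TopologicalSpace X] [NormedField k] [IsUltrametricDist k]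
    (hk : ∃ a : k, 0 < ‖a‖ ∧ ‖a‖ < 1) (F : Set X) :
    (∃ 𝒰 : Set (Set X), 𝒰.Countable ∧ (∀ V ∈ 𝒰, IsClopen V) ∧ F = ⋂₀ 𝒰) ↔
      (∃ f : X → k, Continuous f ∧ (∃ C : ℝ, ∀ x, ‖f x‖ ≤ C) ∧ F = f ⁻¹' {0}) := by
  constructor
  · intro hF
    obtain ⟨V, hV, rfl⟩ := isCOδ_iff_exists_iInter.1 hF
    obtain ⟨a, ha0, ha1⟩ := hk
    have ha : a ≠ 0 := norm_pos_iff.1 ha0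
    refine ⟨firstExitValue V (a ^ ·) 0,
      continuous_firstExitValue hV (tendsto_pow_atTop_nhds_zero_of_norm_lt_one ha1),
      ⟨1, fun x => ?_⟩, (preimage_firstExitValue fun n => pow_ne_zero n ha).symm⟩
    rcases firstExitValue_eq_or_exists_ge (V := V) (c := (a ^ ·)) (y := 0) (x := x) (N := 0)
      (by simp) with h | ⟨n, -, h⟩
    · simp [h]
    · rw [h, norm_pow]
      exact pow_le_one₀ ha0.le ha1.le
  · rintro ⟨f, hf, -, rfl⟩
    exact (IsUltrametricDist.isCOδ_singleton 0).preimage hf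

theorem stmt_1 {X k : Type*} [TopologicalSpace X] [NormedField k] [IsUltrametricDist k]
    [CompleteSpace k] (hk : ∃ a : k, 0 < ‖a‖ ∧ ‖a‖ < 1) (F : Set X) :
    (∃ 𝒰 : Set (Set X), 𝒰.Countable ∧ (∀ V ∈ 𝒰, IsClopen V) ∧ F = ⋂₀ 𝒰) ↔
      (∃ f : X → k, Continuous f ∧ (∃ C : ℝ, ∀ x, ‖f x‖ ≤ C) ∧ F = f ⁻¹' {0}) :=
  stmt_1_general hk F
end

section
/- Let $X$ be a totally disconnected locally compact Hausdorff space and $k$ a non-Archimedean valued field with non-trivial valuation. A point $x \in X$ is a P-point of $X$ if and only if for every bounded continuous function $f \colon X \to k$ with $f(x) = 0$, the zero locus $f^{-1}(\{0\})$ is a neighbourhood of $x$ in $X$. -/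
/-!
The neighbourhood filter of a P-point is closed under countable intersections, and in a metric
space `{0}` is the intersection of countably many balls, so a continuous `f` with `f x = 0`
vanishes near `x`.

Conversely, shrink given neighbourhoods `u n` of `x` to clopen sets `W n ∋ x`. The first index `n`
with `y ∉ W n` (or `⊤` if there is none) is a continuous map `X → ℕ∞`, and composing it with
`n ↦ aⁿ`, `⊤ ↦ 0` gives a bounded continuous `f` vanishing exactly on `⋂ n, W n`.
-/

/-- A point `x` is a P-point if the intersection of any countable family of
neighbourhoods of `x` is again a neighbourhood of `x`. -/
def IsPPoint {X : Type*} [TopologicalSpace X] (x : X) : Prop :=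
  ∀ 𝒰 : Set (Set X), 𝒰.Countable → (∀ U ∈ 𝒰, U ∈ nhds x) → ⋂₀ 𝒰 ∈ nhds x

open Set Filter Topology

section PPoint

variable {X : Type*} [TopologicalSpace X] {x : X}

theorem IsPPoint.countableInterFilter (hx : IsPPoint x) : CountableInterFilter (𝓝 x) := ⟨hx⟩

theorem IsPPoint.eventually_eq_of_continuousAt {Y : Type*} [TopologicalSpace Y] [T1Space Y]
    [FirstCountableTopology Y] (hx : IsPPoint x) {f : X → Y} (hf : ContinuousAt f x) :
    ∀ᶠ y in 𝓝 x, f y = f x := by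
  have := hx.countableInterFilter
  obtain ⟨s, hs⟩ := (𝓝 (f x)).exists_antitone_basis
  have hker : ⋂ i, s i = {f x} := by simpa using hs.ker.symm.trans (ker_nhds (f x))
  have : f ⁻¹' ⋂ i, s i ∈ 𝓝 x := by
    rw [preimage_iInter, countable_iInter_mem]
    exact fun i => hf (hs.mem i)
  rwa [hker] at this

theorem isPPoint_of_iInter_mem_nhds
    (h : ∀ u : ℕ → Set X, (∀ n, u n ∈ 𝓝 x) → ⋂ n, u n ∈ 𝓝 x) : IsPPoint x := by
  intro 𝒰 h𝒰 hmem
  rcases 𝒰.eq_empty_or_nonempty with rfl | hne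
  · simp
  obtain ⟨u, rfl⟩ := h𝒰.exists_eq_range hne
  rw [sInter_range]
  exact h u fun n => hmem _ (mem_range_self n)

end PPoint

namespace ENat

theorem continuous_recTopCoe {Y : Type*} [TopologicalSpace Y] {c : ℕ → Y} {y : Y}
    (hc : Tendsto c atTop (𝓝 y)) : Continuous fun n : ℕ∞ => (n.recTopCoe y c : Y) := by
  refine continuous_iff_continuousAt.2 fun n => ?_
  induction n using ENat.recTopCoe with
  | top =>
    refine (nhds_top_basis.tendsto_iff (𝓝 y).basis_sets).2 fun U hU => ?_
    obtain ⟨N, hN⟩ := eventually_atTop.1 (hc hU)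
    refine ⟨N, natCast_lt_top N, fun m hm => ?_⟩
    induction m using ENat.recTopCoe with
    | top => exact mem_of_mem_nhds hU
    | coe m => exact hN m (Nat.cast_lt.1 (mem_Ioi.1 hm)).le
  | coe n =>
    rw [ContinuousAt, nhds_natCast]
    exact tendsto_pure_nhds _ _

end ENat

section FirstExit

variable {X : Type*} (W : ℕ → Set X)

noncomputable def firstExit (y : X) : ℕ∞ := ⨅ (n : ℕ) (_ : y ∉ W n), (n : ℕ∞)

variable {W}

theorem firstExit_lt_iff {y : X} {b : ℕ∞} :
    firstExit W y < b ↔ ∃ n : ℕ, y ∉ W n ∧ (n : ℕ∞) < b := by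
  simp [firstExit, iInf_lt_iff]

theorem natCast_lt_firstExit_iff {y : X} {m : ℕ} :
    (m : ℕ∞) < firstExit W y ↔ ∀ n ≤ m, y ∈ W n := by
  rw [← not_le, ← ENat.lt_natCast_add_one_iff, firstExit_lt_iff, ← Nat.cast_add_one]
  simp only [not_exists, not_and, Nat.cast_lt, Nat.lt_succ_iff]
  exact forall_congr' fun n => by tauto

theorem firstExit_eq_top_iff {y : X} : firstExit W y = ⊤ ↔ ∀ n, y ∈ W n := by
  rw [← not_lt_top_iff, firstExit_lt_iff]
  simp

theorem continuous_firstExit [TopologicalSpace X] (hW : ∀ n, IsClopen (W n)) :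
    Continuous (firstExit W) := by
  refine OrderTopology.continuous_iff.2 fun b => ⟨?_, ?_⟩
  · induction b using ENat.recTopCoe with
    | top => simp
    | coe m =>
      have : firstExit W ⁻¹' Ioi (m : ℕ∞) = ⋂ n ∈ Iic m, W n := by
        ext y; simp [natCast_lt_firstExit_iff]
      rw [this]
      exact (finite_Iic m).isOpen_biInter fun n _ => (hW n).isOpen
  · have : firstExit W ⁻¹' Iio b = ⋃ n ∈ {n : ℕ | (n : ℕ∞) < b}, (W n)ᶜ := by
      ext y; simp [firstExit_lt_iff, and_comm]
    rw [this]
    exact isOpen_biUnion fun n _ => (hW n).isClosed.isOpen_compl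

end FirstExit

theorem isPPoint_of_preimage_top_mem_nhds {X : Type*} [TopologicalSpace X] {x : X}
    (hX : TopologicalSpace.IsTopologicalBasis {s : Set X | IsClopen s})
    (h : ∀ g : X → ℕ∞, Continuous g → g x = ⊤ → g ⁻¹' {⊤} ∈ 𝓝 x) : IsPPoint x := by
  refine isPPoint_of_iInter_mem_nhds fun u hu => ?_
  choose W hW hxW hWu using fun n => hX.mem_nhds_iff.1 (hu n)
  have hg : firstExit W ⁻¹' {⊤} = ⋂ n, W n := by
    ext y; simp [firstExit_eq_top_iff]
  refine mem_of_superset (h _ (continuous_firstExit hW) (firstExit_eq_top_iff.2 hxW)) ?_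
  rw [hg]
  exact iInter_mono hWu

theorem stmt_4_general {X k : Type*} [TopologicalSpace X] [TotallyDisconnectedSpace X]
    [LocallyCompactSpace X] [T2Space X] [NormedField k]
    (hk : ∃ a : k, 0 < ‖a‖ ∧ ‖a‖ < 1) (x : X) :
    IsPPoint x ↔
      ∀ f : X → k, Continuous f → (∃ C : ℝ, ∀ y, ‖f y‖ ≤ C) → f x = 0 →
        f ⁻¹' {0} ∈ nhds x := by
  refine ⟨fun hx f hf _ hfx => ?_, fun h => ?_⟩
  · rw [← hfx]
    exact hx.eventually_eq_of_continuousAt hf.continuousAt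
  obtain ⟨a, ha0, ha1⟩ := hk
  refine isPPoint_of_preimage_top_mem_nhds loc_compact_Haus_tot_disc_of_zero_dim fun g hg hgx => ?_
  set p : ℕ∞ → k := fun n => n.recTopCoe 0 (a ^ ·)
  have hp : Continuous p :=
    ENat.continuous_recTopCoe (tendsto_pow_atTop_nhds_zero_of_norm_lt_one ha1)
  have hp_zero : p ⁻¹' {0} = {⊤} := by
    ext n
    induction n using ENat.recTopCoe with
    | top => simp [p]
    | coe n => simp [p, norm_pos_iff.1 ha0]
  have hp_le : ∀ n, ‖p n‖ ≤ 1 := by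
    intro n
    induction n using ENat.recTopCoe with
    | top => simp [p]
    | coe n => simpa [p] using pow_le_one₀ ha0.le ha1.le
  have hzero := h (p ∘ g) (hp.comp hg) ⟨1, fun y => hp_le (g y)⟩ (by simp [hgx, p])
  rwa [preimage_comp, hp_zero] at hzero

theorem stmt_4 {X k : Type*} [TopologicalSpace X] [TotallyDisconnectedSpace X]
    [LocallyCompactSpace X] [T2Space X] [NormedField k] [IsUltrametricDist k]
    (hk : ∃ a : k, 0 < ‖a‖ ∧ ‖a‖ < 1) (x : X) :
    IsPPoint x ↔
      ∀ f : X → k, Continuous f → (∃ C : ℝ, ∀ y, ‖f y‖ ≤ C) → f x = 0 →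
        f ⁻¹' {0} ∈ nhds x :=
  stmt_4_general hk x
end

section
/- Let $X$ be a totally disconnected locally compact Hausdorff space, $k$ a non-Archimedean valued field with non-trivial valuation, and $x \in X$. If the maximal ideal $m_{k,x} = \{f \in C_{bd}(X,k) : f(x) = 0\}$ has height $0$ in $C_{bd}(X,k)$, then for every $f \in m_{k,x}$ the zero locus $f^{-1}(\{0\})$ is a neighbourhood of $x$, i.e., $x$ is a P-point of $X$. -/
/-- Evaluation of bounded continuous functions at a point, as a ring homomorphism. -/
def evalHom (X k : Type*) [TopologicalSpace X] [NormedField k] (x : X) :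
    BoundedContinuousFunction X k →+* k where
  toFun f := f x
  map_one' := rfl
  map_mul' _ _ := rfl
  map_zero' := rfl
  map_add' _ _ := rfl

/-!
If `ker (evalHom x)` is a minimal prime, every `f` vanishing at `x` is killed by some power
times a function `s` with `s x ≠ 0`, so `f` vanishes on the open set `{s ≠ 0}` around `x`.
For the P-point property, shrink countably many neighbourhoods of `x` to a decreasing sequence
of clopen ones `W n` and take `g = a ^ (first n with y ∉ W n)`, `g = 0` on `⋂ n, W n`, where
`0 < ‖a‖ < 1`: `g` is bounded and continuous, and its zero set is exactly `⋂ n, W n`.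
-/

open Filter Topology TopologicalSpace BoundedContinuousFunction

theorem Ideal.exists_mul_pow_eq_zero_of_mem_minimalPrimes {R : Type*} [CommSemiring R]
    {p : Ideal R} (hp : p ∈ minimalPrimes R) {f : R} (hf : f ∈ p) :
    ∃ s ∉ p, ∃ n : ℕ, s * f ^ n = 0 := by
  have : p.IsPrime := hp.1.1
  let S : Submonoid R := p.primeCompl ⊔ Submonoid.powers f
  suffices (0 : R) ∈ S by
    obtain ⟨s, hs, _, ⟨n, rfl⟩, hsf⟩ := Submonoid.mem_sup.mp this
    exact ⟨s, hs, n, hsf⟩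
  -- Otherwise a prime avoiding `S` would lie inside `p` and miss `f`, against minimality.
  by_contra h0
  obtain ⟨q, hq, -, hqS⟩ := Ideal.exists_le_prime_disjoint (⊥ : Ideal R) S
    (Set.disjoint_left.mpr fun u hu huS => h0 ((Ideal.mem_bot.mp hu) ▸ huS))
  have hqp : q ≤ p := fun g hg => by
    by_contra hgp
    exact Set.disjoint_left.mp hqS hg (Submonoid.mem_sup_left hgp)
  have hfq : f ∈ q := hp.2 ⟨hq, bot_le⟩ hqp hf
  exact Set.disjoint_left.mp hqS hfq (Submonoid.mem_sup_right (Submonoid.mem_powers f))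

theorem preimage_zero_mem_nhds_of_ker_evalHom_mem_minimalPrimes {X k : Type*}
    [TopologicalSpace X] [NormedField k] {x : X}
    (hx : RingHom.ker (evalHom X k x) ∈ minimalPrimes (X →ᵇ k)) {f : X →ᵇ k} (hf : f x = 0) :
    f ⁻¹' {0} ∈ 𝓝 x := by
  obtain ⟨s, hs, n, hsf⟩ := Ideal.exists_mul_pow_eq_zero_of_mem_minimalPrimes hx hf
  have hsx : s x ≠ 0 := hs
  filter_upwards [(isOpen_ne_fun s.continuous continuous_const).mem_nhds hsx] with y hy
  have : s y * f y ^ n = 0 := by simpa using congr($hsf y)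
  exact eq_zero_of_pow_eq_zero ((mul_eq_zero.mp this).resolve_left hy)

section ExitPow

variable {X k : Type*} [NormedField k] {W : ℕ → Set X} {a : k} {y : X}

/-- Junk value `0` when `y ∈ ⋂ n, W n`. -/
noncomputable def exitIndex (W : ℕ → Set X) (y : X) : ℕ := sInf {n | y ∉ W n}

theorem notMem_exitIndex (hy : y ∉ ⋂ n, W n) : y ∉ W (exitIndex W y) :=
  Nat.sInf_mem (by simpa using hy : ∃ n, y ∉ W n)

theorem exitIndex_eq {N : ℕ} (hN : y ∉ W N) (hlt : ∀ m < N, y ∈ W m) : exitIndex W y = N := by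
  refine le_antisymm (Nat.sInf_le hN) (not_lt.mp fun h => ?_)
  exact notMem_exitIndex (fun hy => hN (Set.mem_iInter.mp hy N)) (hlt _ h)

theorem lt_exitIndex (hW : Antitone W) (hy : y ∉ ⋂ n, W n) {n : ℕ} (hyn : y ∈ W n) :
    n < exitIndex W y :=
  not_le.mp fun h => notMem_exitIndex hy (hW h hyn)

noncomputable def exitPow (W : ℕ → Set X) (a : k) : X → k :=
  (⋂ n, W n)ᶜ.indicator fun y => a ^ exitIndex W y

theorem exitPow_eq_zero_iff (ha : a ≠ 0) : exitPow W a y = 0 ↔ y ∈ ⋂ n, W n := by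
  simp [exitPow, Set.indicator_apply_eq_zero, ha]

theorem norm_exitPow_le_one (ha : ‖a‖ ≤ 1) (y : X) : ‖exitPow W a y‖ ≤ 1 :=
  (norm_indicator_le_norm_self _ _).trans (by rw [norm_pow]; exact pow_le_one₀ (norm_nonneg a) ha)

theorem norm_exitPow_le_of_mem (hW : Antitone W) (ha : ‖a‖ ≤ 1) {n : ℕ} (hyn : y ∈ W n) :
    ‖exitPow W a y‖ ≤ ‖a‖ ^ n := by
  by_cases hy : y ∈ ⋂ n, W n
  · rw [exitPow, Set.indicator_of_notMem (not_not.mpr hy), norm_zero]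
    positivity
  · rw [exitPow, Set.indicator_of_mem hy, norm_pow]
    exact pow_le_pow_of_le_one (norm_nonneg a) ha (lt_exitIndex hW hy hyn).le

variable [TopologicalSpace X]

theorem exitPow_eventuallyEq (hW : ∀ n, IsClopen (W n)) (hy : y ∉ ⋂ n, W n) :
    exitPow W a =ᶠ[𝓝 y] fun _ => a ^ exitIndex W y := by
  set N := exitIndex W y
  have hO : IsOpen ((W N)ᶜ ∩ ⋂ m ∈ Finset.range N, W m) :=
    (hW N).compl.isOpen.inter (isOpen_biInter_finset fun m _ => (hW m).isOpen)
  have hyO : y ∈ (W N)ᶜ ∩ ⋂ m ∈ Finset.range N, W m := by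
    refine ⟨notMem_exitIndex hy, Set.mem_iInter₂.mpr fun m hm => ?_⟩
    by_contra hym
    exact (Finset.mem_range.mp hm).not_ge (Nat.sInf_le hym)
  filter_upwards [hO.mem_nhds hyO] with z ⟨hzN, hzlt⟩
  have hz : z ∉ ⋂ n, W n := fun hz => hzN (Set.mem_iInter.mp hz N)
  rw [exitPow, Set.indicator_of_mem hz,
    exitIndex_eq hzN fun m hm => Set.mem_iInter₂.mp hzlt m (Finset.mem_range.mpr hm)]

theorem continuous_exitPow (hW : Antitone W) (hWc : ∀ n, IsClopen (W n)) (ha : ‖a‖ < 1) :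
    Continuous (exitPow W a) := by
  refine continuous_iff_continuousAt.mpr fun y => ?_
  by_cases hy : y ∈ ⋂ n, W n
  · rw [ContinuousAt, exitPow, Set.indicator_of_notMem (not_not.mpr hy), ← exitPow,
      Metric.tendsto_nhds]
    intro ε hε
    obtain ⟨n, hn⟩ := exists_pow_lt_of_lt_one hε ha
    filter_upwards [(hWc n).isOpen.mem_nhds (Set.mem_iInter.mp hy n)] with z hz
    rw [dist_zero_right]
    exact (norm_exitPow_le_of_mem hW ha.le hz).trans_lt hn
  · exact continuousAt_const.congr (exitPow_eventuallyEq hWc hy).symm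

end ExitPow

theorem iInter_mem_nhds_of_antitone_isClopen {X k : Type*} [TopologicalSpace X] [NormedField k]
    {x : X} {a : k} (ha0 : a ≠ 0) (ha1 : ‖a‖ < 1)
    (hzero : ∀ f : X →ᵇ k, f x = 0 → f ⁻¹' {0} ∈ 𝓝 x) {W : ℕ → Set X} (hW : Antitone W)
    (hWc : ∀ n, IsClopen (W n)) (hx : ∀ n, x ∈ W n) : ⋂ n, W n ∈ 𝓝 x := by
  let f : X →ᵇ k := .ofNormedAddCommGroup (exitPow W a) (continuous_exitPow hW hWc ha1) 1
    (norm_exitPow_le_one ha1.le)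
  filter_upwards [hzero f ((exitPow_eq_zero_iff ha0).mpr (Set.mem_iInter.mpr hx))] with y hy
  exact (exitPow_eq_zero_iff ha0).mp hy

theorem isPPoint_of_forall_iInter_mem_nhds {X : Type*} [TopologicalSpace X] {x : X}
    (h : ∀ U : ℕ → Set X, (∀ n, U n ∈ 𝓝 x) → ⋂ n, U n ∈ 𝓝 x) : IsPPoint x := by
  intro 𝒰 h𝒰 hU
  rcases 𝒰.eq_empty_or_nonempty with rfl | hne
  · simp
  obtain ⟨U, rfl⟩ := h𝒰.exists_eq_range hne
  rw [Set.sInter_range]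
  exact h U fun n => hU _ (Set.mem_range_self n)

theorem isPPoint_of_forall_preimage_zero_mem_nhds {X k : Type*} [TopologicalSpace X]
    [NormedField k] (hB : IsTopologicalBasis {s : Set X | IsClopen s}) {x : X} {a : k}
    (ha0 : a ≠ 0) (ha1 : ‖a‖ < 1) (hzero : ∀ f : X →ᵇ k, f x = 0 → f ⁻¹' {0} ∈ 𝓝 x) :
    IsPPoint x := by
  refine isPPoint_of_forall_iInter_mem_nhds fun U hU => ?_
  choose V hVc hxV hVU using fun n => hB.mem_nhds_iff.mp (hU n)
  have hV : ⋂ n, Set.dissipate V n ∈ 𝓝 x :=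
    iInter_mem_nhds_of_antitone_isClopen ha0 ha1 hzero Set.antitone_dissipate
      (fun n => (Set.finite_le_nat n).isClopen_biInter fun m _ => hVc m)
      (fun n => Set.mem_dissipate.mpr fun m _ => hxV m)
  rw [Set.iInter_dissipate] at hV
  exact mem_of_superset hV (Set.iInter_mono hVU)

theorem stmt_6_general {X k : Type*} [TopologicalSpace X] [TotallyDisconnectedSpace X]
    [LocallyCompactSpace X] [T2Space X] [NormedField k]
    (hk : ∃ a : k, 0 < ‖a‖ ∧ ‖a‖ < 1) (x : X)
    (h : ∀ p : Ideal (BoundedContinuousFunction X k), p.IsPrime →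
      p ≤ RingHom.ker (evalHom X k x) → p = RingHom.ker (evalHom X k x)) :
    (∀ f : BoundedContinuousFunction X k, f x = 0 →
      (fun y => f y) ⁻¹' {0} ∈ nhds x) ∧ IsPPoint x := by
  obtain ⟨a, ha0, ha1⟩ := hk
  have hmin : RingHom.ker (evalHom X k x) ∈ minimalPrimes (X →ᵇ k) :=
    ⟨⟨RingHom.ker_isPrime _, bot_le⟩, fun q hq hle => (h q hq.1 hle).ge⟩
  have hzero : ∀ f : X →ᵇ k, f x = 0 → f ⁻¹' {0} ∈ 𝓝 x := fun _ =>
    preimage_zero_mem_nhds_of_ker_evalHom_mem_minimalPrimes hmin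
  exact ⟨hzero, isPPoint_of_forall_preimage_zero_mem_nhds loc_compact_Haus_tot_disc_of_zero_dim
    (norm_pos_iff.mp ha0) ha1 hzero⟩

theorem stmt_6 {X k : Type*} [TopologicalSpace X] [TotallyDisconnectedSpace X]
    [LocallyCompactSpace X] [T2Space X] [NormedField k] [IsUltrametricDist k]
    (hk : ∃ a : k, 0 < ‖a‖ ∧ ‖a‖ < 1) (x : X)
    (h : ∀ p : Ideal (BoundedContinuousFunction X k), p.IsPrime →
      p ≤ RingHom.ker (evalHom X k x) → p = RingHom.ker (evalHom X k x)) :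
    (∀ f : BoundedContinuousFunction X k, f x = 0 →
      (fun y => f y) ⁻¹' {0} ∈ nhds x) ∧ IsPPoint x :=
  stmt_6_general hk x h
end

section
/- Let $X$ be a totally disconnected locally compact Hausdorff space, $k$ a complete non-Archimedean valued field, and $F \subset X$ a compact subset. Then the restriction map $C_{bd}(X,k) \to C(F,k)$, $f \mapsto f|_F$, is surjective; i.e., every continuous $k$-valued function on $F$ extends to a bounded continuous function on $X$. -/
/-!
Continuous functions on the compact totally disconnected space `F` are uniform limits of
locally constant ones. A locally constant `v` on `F` takes finitely many values `b` on clopen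
fibres, each of which is cut out of `F` by a clopen set `V b` of `X`; then `∑ b • 𝟙_{V b}`
extends `v` and, the norm being ultrametric, has sup norm at most `‖v‖`. So restriction
`(X →ᵇ k) → (F →ᵇ k)` is onto a dense subgroup with norm control, hence, `X →ᵇ k` being complete,
onto its closure (`controlled_closure_of_complete`).
-/

open Set Topology BoundedContinuousFunction

section TotallyDisconnected

variable {X : Type*} [TopologicalSpace X] [TotallyDisconnectedSpace X] [LocallyCompactSpace X]
  [T2Space X]

theorem exists_isClopen_of_isCompact_subset_isOpen {K O : Set X} (hK : IsCompact K)
    (hO : IsOpen O) (hKO : K ⊆ O) : ∃ V : Set X, IsClopen V ∧ K ⊆ V ∧ V ⊆ O := by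
  obtain ⟨L, hL, hKL, hLO⟩ := exists_compact_between hK hO hKO
  have hW (x : K) : ∃ W : Set X, IsClopen W ∧ (x : X) ∈ W ∧ W ⊆ interior L :=
    loc_compact_Haus_tot_disc_of_zero_dim.mem_nhds_iff.1 (isOpen_interior.mem_nhds (hKL x.2))
  choose W hW hxW hWL using hW
  obtain ⟨t, ht⟩ := hK.elim_finite_subcover W (fun x => (hW x).isOpen)
    (fun x hx => mem_iUnion.2 ⟨⟨x, hx⟩, hxW ⟨x, hx⟩⟩)
  refine ⟨⋃ i ∈ t, W i, t.finite_toSet.isClopen_biUnion fun i _ => hW i, ht, ?_⟩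
  exact iUnion₂_subset fun i _ => (hWL i).trans (interior_subset.trans hLO)

theorem IsCompact.exists_isClopen_preimage_val_eq {K : Set X} (hK : IsCompact K) {C : Set K}
    (hC : IsClopen C) : ∃ V : Set X, IsClopen V ∧ Subtype.val ⁻¹' V = C := by
  have := isCompact_iff_compactSpace.mp hK
  have hCc : IsCompact (Subtype.val '' Cᶜ) :=
    hC.compl.isClosed.isCompact.image continuous_subtype_val
  obtain ⟨V, hV, hCV, hVC⟩ := exists_isClopen_of_isCompact_subset_isOpen
    (hC.isClosed.isCompact.image continuous_subtype_val) hCc.isClosed.isOpen_compl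
    (by rw [subset_compl_iff_disjoint_right, disjoint_image_iff Subtype.val_injective]
        exact disjoint_compl_right)
  refine ⟨V, hV, Subset.antisymm (fun y hy => ?_) fun y hy => hCV ⟨y, hy, rfl⟩⟩
  by_contra hyC
  exact hVC hy ⟨y, hyC, rfl⟩

theorem IsLocallyConstant.exists_continuous_extension_of_norm_le {E : Type*} [SeminormedAddCommGroup E]
    [IsUltrametricDist E] {K : Set X} (hK : IsCompact K) {v : K → E} (hv : IsLocallyConstant v)
    {M : ℝ} (hM : 0 ≤ M) (hvM : ∀ y, ‖v y‖ ≤ M) :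
    ∃ u : X → E, Continuous u ∧ (∀ x, ‖u x‖ ≤ M) ∧ ∀ y : K, u y = v y := by
  classical
  have := isCompact_iff_compactSpace.mp hK
  choose V hV hVv using fun b : E => hK.exists_isClopen_preimage_val_eq (hv.isClopen_fiber b)
  refine ⟨fun x => ∑ b ∈ hv.range_finite.toFinset, (V b).indicator (fun _ => b) x, ?_, ?_, ?_⟩
  · exact continuous_finsetSum _ fun b _ =>
      continuous_indicator (by simp [(hV b).frontier_eq]) continuousOn_const
  · -- the sets `V b` may overlap off `K`, but the ultrametric inequality still bounds the sum
    refine fun x => IsUltrametricDist.norm_sum_le_of_forall_le_of_nonneg hM fun b hb => ?_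
    obtain ⟨y, rfl⟩ := hv.range_finite.mem_toFinset.1 hb
    by_cases hx : x ∈ V (v y) <;> simp [hx, hM, hvM]
  · intro y
    have hyV (b : E) : (y : X) ∈ V b ↔ v y = b := by
      rw [← mem_preimage, hVv]; rfl
    dsimp only
    rw [Finset.sum_eq_single (v y) (fun b _ hb => by simp [hyV, Ne.symm hb])
      (fun h => (h (hv.range_finite.mem_toFinset.2 ⟨y, rfl⟩)).elim)]
    simp [hyV]

end TotallyDisconnected

namespace BoundedContinuousFunction

theorem dense_setOf_isLocallyConstant {α E : Type*} [TopologicalSpace α] [CompactSpace α]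
    [T2Space α] [TotallyDisconnectedSpace α] [PseudoMetricSpace E] :
    Dense {v : α →ᵇ E | IsLocallyConstant v} := by
  refine Metric.dense_iff.2 fun f ε hε => ?_
  obtain ⟨n, q, c, hq, hqc⟩ := ContinuousMap.exists_finite_approximation_of_mem_nhds_diagonal
    f.toContinuousMap (nhdsSet_diagonal_le_uniformity (Metric.dist_mem_uniformity hε))
  have hv : IsLocallyConstant (c ∘ q) := (IsLocallyConstant.of_discrete c).comp_continuous hq
  refine ⟨mkOfCompact ⟨c ∘ q, hv.continuous⟩, ?_, hv⟩
  rw [Metric.mem_ball, dist_comm, dist_lt_iff_of_compact hε]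
  exact hqc

section

variable (α E : Type*) [TopologicalSpace α] [SeminormedAddCommGroup E]

def isLocallyConstantAddSubgroup : AddSubgroup (α →ᵇ E) where
  carrier := {v | IsLocallyConstant v}
  zero_mem' := IsLocallyConstant.const 0
  add_mem' hu hv := hu.add hv
  neg_mem' hv := hv.neg

variable {X : Type*} [TopologicalSpace X]

noncomputable def domRestrictHom (K : Set X) : NormedAddGroupHom (X →ᵇ E) (K →ᵇ E) :=
  AddMonoidHom.mkNormedAddGroupHom
    { toFun f := f.domRestrict K, map_zero' := rfl, map_add' _ _ := rfl } 1
    fun f => (one_mul ‖f‖).symm ▸ norm_compContinuous_le f _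

variable {E} [TotallyDisconnectedSpace X] [LocallyCompactSpace X] [T2Space X]
  [IsUltrametricDist E]

theorem surjectiveOnWith_domRestrictHom {K : Set X} (hK : IsCompact K) :
    (domRestrictHom E K).SurjectiveOnWith (isLocallyConstantAddSubgroup K E) 1 := by
  intro v hv
  obtain ⟨u, hu, huv, hvu⟩ :=
    IsLocallyConstant.exists_continuous_extension_of_norm_le hK hv (norm_nonneg v) v.norm_coe_le_norm
  refine ⟨ofNormedAddCommGroup u hu ‖v‖ huv, ext hvu, ?_⟩
  rw [one_mul]
  exact (norm_le (norm_nonneg v)).2 huv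

end

theorem domRestrictHom_surjective {X E : Type*} [TopologicalSpace X] [TotallyDisconnectedSpace X]
    [LocallyCompactSpace X] [T2Space X] [NormedAddCommGroup E] [IsUltrametricDist E]
    [CompleteSpace E] {K : Set X} (hK : IsCompact K) :
    Function.Surjective (domRestrictHom E K) := by
  have := isCompact_iff_compactSpace.mp hK
  have hdense : (isLocallyConstantAddSubgroup K E).topologicalClosure = ⊤ := by
    rw [← SetLike.coe_set_eq, AddSubgroup.topologicalClosure_coe]
    exact dense_setOf_isLocallyConstant.closure_eq
  intro g
  obtain ⟨f, hf, -⟩ := controlled_closure_of_complete one_pos one_pos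
    (surjectiveOnWith_domRestrictHom hK) g (hdense ▸ AddSubgroup.mem_top g)
  exact ⟨f, hf⟩

end BoundedContinuousFunction

theorem stmt_8 {X k : Type*} [TopologicalSpace X] [TotallyDisconnectedSpace X]
    [LocallyCompactSpace X] [T2Space X] [NormedField k] [IsUltrametricDist k]
    [CompleteSpace k] (F : Set X) (hF : IsCompact F)
    (g : F → k) (hg : Continuous g) :
    ∃ f : X → k, Continuous f ∧ (∃ C : ℝ, ∀ x, ‖f x‖ ≤ C) ∧ ∀ y : F, f y = g y := by
  have := isCompact_iff_compactSpace.mp hF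
  obtain ⟨f, hf⟩ := domRestrictHom_surjective hF (mkOfCompact ⟨g, hg⟩)
  exact ⟨f, f.continuous, ⟨‖f‖, f.norm_coe_le_norm⟩, fun y => DFunLike.congr_fun hf y⟩
end

section
/- Let $X$ be a totally disconnected locally compact Hausdorff space and $k$ a local field (complete discretely valued field with finite residue field). Then $X$ is countable at infinity if and only if there exists a continuous function $f \colon X \to k$ that vanishes at infinity (the preimage of $\{a \in k : |a| \geq \epsilon\}$ is compact for every $\epsilon > 0$) and has no zero. -/
/-!
A totally disconnected locally compact Hausdorff space has a basis of compact clopen sets, so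
every compact set lies in a compact clopen set. If `X` is the union of compacts `K n`, enlarge
them to compact clopens `V n` and let `N x` be the least `n` with `x ∈ V n`: this is a locally
constant function with compact sublevel sets, and for any `a` with `0 < ‖a‖ < 1` the function
`x ↦ a ^ N x` is continuous, vanishes at infinity and has no zero. Conversely, if `f` is such a
function, the sets `{x | 1 / (n + 1) ≤ ‖f x‖}` exhaust `X`.
-/

open Set

theorem exists_isLocallyConstant_forall_mem_of_isClopen {X : Type*} [TopologicalSpace X]
    {V : ℕ → Set X} (hV : ∀ n, IsClopen (V n)) (hcov : ∀ x, ∃ n, x ∈ V n) :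
    ∃ N : X → ℕ, IsLocallyConstant N ∧ ∀ x, x ∈ V (N x) := by
  classical
  refine ⟨fun x => Nat.find (hcov x), IsLocallyConstant.iff_isOpen_fiber.2 fun n => ?_,
    fun x => Nat.find_spec (hcov x)⟩
  have hfiber : (fun x => Nat.find (hcov x)) ⁻¹' {n} = V n \ ⋃ m ∈ Finset.range n, V m := by
    ext x
    simp [Nat.find_eq_iff]
  rw [hfiber]
  exact (hV n).isOpen.sdiff
    ((Finset.range n).finite_toSet.isClosed_biUnion fun m _ => (hV m).isClosed)

section TotallyDisconnected

variable {X : Type*} [TopologicalSpace X] [TotallyDisconnectedSpace X] [LocallyCompactSpace X]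
  [T2Space X]

theorem IsCompact.exists_isClopen_isCompact_superset {K : Set X} (hK : IsCompact K) :
    ∃ V, IsClopen V ∧ IsCompact V ∧ K ⊆ V := by
  obtain ⟨L, hL, hKL⟩ := exists_compact_superset hK
  have hW : ∀ x ∈ K, ∃ W, IsClopen W ∧ x ∈ W ∧ W ⊆ interior L := fun x hx =>
    loc_compact_Haus_tot_disc_of_zero_dim.exists_subset_of_mem_open (hKL hx) isOpen_interior
  choose W hWclopen hxW hWL using hW
  obtain ⟨t, ht⟩ :=
    hK.elim_nhds_subcover' W fun x hx => (hWclopen x hx).isOpen.mem_nhds (hxW x hx)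
  have hclopen : IsClopen (⋃ x ∈ t, W x x.2) := isClopen_biUnion_finset fun x _ => hWclopen x x.2
  exact ⟨_, hclopen, hL.of_isClosed_subset hclopen.isClosed
    (iUnion₂_subset fun x _ => (hWL x x.2).trans interior_subset), ht⟩

theorem exists_isLocallyConstant_nat_isCompact_setOf_le {K : ℕ → Set X}
    (hK : ∀ n, IsCompact (K n)) (hcov : ⋃ n, K n = univ) :
    ∃ N : X → ℕ, IsLocallyConstant N ∧ ∀ M, IsCompact {x | N x ≤ M} := by
  choose V hVclopen hVcompact hKV using fun n => (hK n).exists_isClopen_isCompact_superset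
  have hVcov : ∀ x, ∃ n, x ∈ V n := fun x =>
    (mem_iUnion.1 (hcov ▸ mem_univ x)).imp fun n hn => hKV n hn
  obtain ⟨N, hN, hNV⟩ := exists_isLocallyConstant_forall_mem_of_isClopen hVclopen hVcov
  refine ⟨N, hN, fun M => ((finite_le_nat M).isCompact_biUnion fun m _ => hVcompact m)
    |>.of_isClosed_subset (isClosed_le hN.continuous continuous_const) fun x hx => mem_biUnion hx (hNV x)⟩

end TotallyDisconnected

theorem isCompact_setOf_le_norm_pow {X k : Type*} [TopologicalSpace X] [NormedDivisionRing k]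
    {a : k} (ha : ‖a‖ < 1) {N : X → ℕ} (hN : Continuous N)
    (hNc : ∀ M, IsCompact {x | N x ≤ M}) {ε : ℝ} (hε : 0 < ε) :
    IsCompact {x | ε ≤ ‖a ^ N x‖} := by
  obtain ⟨M, hM⟩ := exists_pow_lt_of_lt_one hε ha
  refine (hNc M).of_isClosed_subset (isClosed_le continuous_const (by fun_prop))
    fun x hx => ?_
  show N x ≤ M
  by_contra! hMN
  have : ‖a‖ ^ N x ≤ ‖a‖ ^ M := pow_le_pow_of_le_one (norm_nonneg a) ha.le hMN.le
  simp only [mem_ofPred_eq, norm_pow] at hx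
  linarith

theorem exists_compact_exhaustion_of_isCompact_setOf_le {X : Type*} [TopologicalSpace X]
    {g : X → ℝ} (hg : Continuous g) (hpos : ∀ x, 0 < g x)
    (hcpt : ∀ ε : ℝ, 0 < ε → IsCompact {x | ε ≤ g x}) :
    ∃ K : ℕ → Set X, (∀ n, IsCompact (K n)) ∧ (∀ n, K n ⊆ interior (K (n + 1))) ∧
      ⋃ n, K n = univ := by
  refine ⟨fun n => {x | 1 / ((n : ℝ) + 1) ≤ g x}, fun n => hcpt _ (by positivity),
    fun n => ?_, ?_⟩
  · have hlt : 1 / ((n : ℝ) + 1 + 1) < 1 / ((n : ℝ) + 1) :=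
      one_div_lt_one_div_of_lt (by positivity) (by linarith)
    have hopen : IsOpen {x | 1 / ((n : ℝ) + 1 + 1) < g x} := isOpen_lt continuous_const hg
    refine fun x hx => interior_maximal (fun y hy => ?_) hopen (hlt.trans_le hx)
    simp only [mem_ofPred_eq, Nat.cast_succ] at hy ⊢
    exact hy.le
  · refine eq_univ_of_forall fun x => mem_iUnion.2 ?_
    obtain ⟨n, hn⟩ := exists_nat_one_div_lt (hpos x)
    exact ⟨n, hn.le⟩

theorem stmt_12_general {X k : Type*} [TopologicalSpace X] [TotallyDisconnectedSpace X]
    [LocallyCompactSpace X] [T2Space X] [NormedField k]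
    (hdisc : ∃ a : k, 0 < ‖a‖ ∧ ‖a‖ < 1 ∧ ∀ b : k, b ≠ 0 → ∃ n : ℤ, ‖b‖ = ‖a‖ ^ n) :
    (∃ K : ℕ → Set X, (∀ n, IsCompact (K n)) ∧ (∀ n, K n ⊆ interior (K (n + 1))) ∧
        ⋃ n, K n = Set.univ) ↔
      (∃ f : X → k, Continuous f ∧ (∀ ε : ℝ, 0 < ε → IsCompact {x : X | ε ≤ ‖f x‖}) ∧
        ∀ x, f x ≠ 0) := by
  obtain ⟨a, ha0, ha1, -⟩ := hdisc
  constructor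
  · rintro ⟨K, hK, -, hcov⟩
    obtain ⟨N, hN, hNc⟩ := exists_isLocallyConstant_nat_isCompact_setOf_le hK hcov
    exact ⟨fun x => a ^ N x, (hN.comp (a ^ ·)).continuous,
      fun ε hε => isCompact_setOf_le_norm_pow ha1 hN.continuous hNc hε,
      fun x => pow_ne_zero _ (norm_pos_iff.1 ha0)⟩
  · rintro ⟨f, hf, hcpt, hne⟩
    exact exists_compact_exhaustion_of_isCompact_setOf_le hf.norm
      (fun x => norm_pos_iff.2 (hne x)) hcpt

theorem stmt_12 {X k : Type*} [TopologicalSpace X] [TotallyDisconnectedSpace X]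
    [LocallyCompactSpace X] [T2Space X] [NormedField k] [IsUltrametricDist k]
    [CompleteSpace k]
    (hdisc : ∃ a : k, 0 < ‖a‖ ∧ ‖a‖ < 1 ∧ ∀ b : k, b ≠ 0 → ∃ n : ℤ, ‖b‖ = ‖a‖ ^ n)
    (hres : IsCompact {x : k | ‖x‖ ≤ 1}) :
    (∃ K : ℕ → Set X, (∀ n, IsCompact (K n)) ∧ (∀ n, K n ⊆ interior (K (n + 1))) ∧
        ⋃ n, K n = Set.univ) ↔
      (∃ f : X → k, Continuous f ∧ (∀ ε : ℝ, 0 < ε → IsCompact {x : X | ε ≤ ‖f x‖}) ∧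
        ∀ x, f x ≠ 0) :=
  stmt_12_general hdisc
end

section
/- Let $X$ be a totally disconnected compact Hausdorff space and $F \subset X$ a closed subset whose complement $X \setminus F$ is countable at infinity. Then every subset of $F$ that is a countable intersection of clopen subsets of $F$ is also a countable intersection of clopen subsets of $X$; in particular, the map $\mathrm{CO}_\delta(X) \to \mathrm{CO}_\delta(F)$, $U \mapsto U \cap F$, is surjective. -/
/-!
Extend each clopen `V n` of `F` to a clopen of `X` by separating the disjoint compact sets `V n`
and `F \ V n`. This only recovers `⋂ V n` up to intersection with `F`; but `F` is itself in
`CO_δ(X)`, since each compact piece of `X \ F` lies in a clopen subset of `X \ F`.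
-/

open Set Topology

section

variable {X : Type*} [TopologicalSpace X] [CompactSpace X] [T2Space X]
  [TotallyDisconnectedSpace X]

theorem Topology.IsClosedEmbedding.exists_isClopen_preimage_eq {Y : Type*} [TopologicalSpace Y]
    {f : Y → X} (hf : IsClosedEmbedding f) {V : Set Y} (hV : IsClopen V) :
    ∃ W : Set X, IsClopen W ∧ f ⁻¹' W = V := by
  have hdisj : f '' V ⊆ (f '' Vᶜ)ᶜ := by
    simpa using image_compl_subset hf.injective (s := Vᶜ)
  obtain ⟨W, hW, hVW, hWV⟩ := exists_clopen_of_closed_subset_open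
    (hf.isClosedMap V hV.isClosed) (hf.isClosedMap _ hV.compl.isClosed).isOpen_compl hdisj
  have hWV' : f ⁻¹' W ⊆ V := by
    simpa [preimage_image_eq _ hf.injective] using preimage_mono (f := f) hWV
  exact ⟨W, hW, hWV'.antisymm (image_subset_iff.mp hVW)⟩

theorem exists_isClopen_iUnion_eq_of_isOpen {ι : Type*} {U : Set X} (hU : IsOpen U)
    {K : ι → Set X} (hK : ∀ i, IsCompact (K i)) (hKU : ⋃ i, K i = U) :
    ∃ C : ι → Set X, (∀ i, IsClopen (C i)) ∧ ⋃ i, C i = U := by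
  have hKU' (i : ι) : K i ⊆ U := hKU ▸ subset_iUnion K i
  choose C hC hKC hCU using fun i ↦
    exists_clopen_of_closed_subset_open (hK i).isClosed hU (hKU' i)
  exact ⟨C, hC, (iUnion_subset hCU).antisymm (hKU ▸ iUnion_mono hKC)⟩

theorem exists_isClopen_iInter_eq_of_isClosed {ι : Type*} {F : Set X} (hF : IsClosed F)
    {K : ι → Set X} (hK : ∀ i, IsCompact (K i)) (hKF : ⋃ i, K i = Fᶜ) :
    ∃ D : ι → Set X, (∀ i, IsClopen (D i)) ∧ ⋂ i, D i = F := by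
  obtain ⟨C, hC, hCF⟩ := exists_isClopen_iUnion_eq_of_isOpen hF.isOpen_compl hK hKF
  exact ⟨fun i ↦ (C i)ᶜ, fun i ↦ (hC i).compl, by rw [← compl_iUnion, hCF, compl_compl]⟩

end

theorem stmt_13 {X : Type*} [TopologicalSpace X] [TotallyDisconnectedSpace X]
    [CompactSpace X] [T2Space X] (F : Set X) (hF : IsClosed F)
    (hci : ∃ K : ℕ → Set X, (∀ n, IsCompact (K n)) ∧ (∀ n, K n ⊆ interior (K (n + 1))) ∧
      ⋃ n, K n = Fᶜ)
    (V : ℕ → Set F) (hV : ∀ n, IsClopen (V n)) :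
    ∃ U : ℕ → Set X, (∀ n, IsClopen (U n)) ∧
      Subtype.val '' (⋂ n, V n) = ⋂ n, U n := by
  obtain ⟨K, hK, -, hKF⟩ := hci
  obtain ⟨D, hD, hDF⟩ := exists_isClopen_iInter_eq_of_isClosed hF hK hKF
  choose W hW hWV using fun n ↦ hF.isClosedEmbedding_subtypeVal.exists_isClopen_preimage_eq (hV n)
  refine ⟨fun n ↦ D n ∩ W n, fun n ↦ (hD n).inter (hW n), ?_⟩
  rw [iInter_inter_distrib, hDF, ← Subtype.image_preimage_coe, preimage_iInter]
  simp only [hWV]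
end

section
/- Let $X$ be a non-empty totally disconnected compact Hausdorff space such that, for every cardinal $\beta < \aleph_1$ (i.e., every countable cardinal), every non-empty intersection of at most $\beta$ clopen subsets of $X$ has an interior point. Then the intersection of any family of at most $\aleph_1$ dense open subsets of $X$ is non-empty. -/
/-!
Index the dense open sets by a well-order all of whose initial segments are countable
(a suborder of `ω₁`). By transfinite recursion choose a decreasing family of nonempty clopen
sets `C a ⊆ V a`: at stage `a` the countably many earlier `C b` form a chain of nonempty compact
sets, so their intersection is nonempty, hence has an interior point by hypothesis; that
interior meets the dense open `V a`, and zero-dimensionality provides a nonempty clopen set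
inside both. Compactness once more gives a point common to all `C a`.
-/

open Set Cardinal Ordinal

theorem Ordinal.countable_Iio_omega_one (a : (ω₁).ToType) : (Iio a).Countable := by
  rw [← le_aleph0_iff_set_countable, ← lt_aleph_one_iff]
  simpa using mk_Iio_lt a (by simp)

theorem WellFoundedLT.exists_antitone_of_forall_exists {W α : Type*} [LinearOrder W]
    [WellFoundedLT W] (P : W → Set α → Prop)
    (step : ∀ a (C : W → Set α), (∀ b < a, P b (C b)) → AntitoneOn C (Iio a) →
      ∃ S, P a S ∧ ∀ b < a, S ⊆ C b) :
    ∃ C : W → Set α, (∀ a, P a (C a)) ∧ Antitone C := by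
  classical
  let F : ∀ a, (∀ b, b < a → Set α) → Set α := fun a C =>
    if h : ∃ S, P a S ∧ ∀ b (hb : b < a), S ⊆ C b hb then h.choose else ∅
  let C := wellFounded_lt.fix F
  have hC : ∀ a, P a (C a) ∧ ∀ b < a, C a ⊆ C b := by
    intro a
    induction a using WellFoundedLT.induction with
    | _ a ih =>
      have hanti : AntitoneOn C (Iio a) := fun b _ c hc hbc =>
        hbc.eq_or_lt.elim (fun h => h ▸ le_rfl) fun h => (ih c hc).2 b h
      have hex : ∃ S, P a S ∧ ∀ b (_ : b < a), S ⊆ C b :=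
        step a C (fun b hb => (ih b hb).1) hanti
      rw [show C a = hex.choose from (wellFounded_lt.fix_eq F a).trans (dif_pos hex)]
      exact hex.choose_spec
  refine ⟨C, fun a => (hC a).1, fun b a hba => ?_⟩
  exact hba.eq_or_lt.elim (fun h => h ▸ le_rfl) fun h => (hC a).2 b h

def CountableClopenInterHasInterior (X : Type) [TopologicalSpace X] : Prop :=
  ∀ (ι : Type) (_ : Countable ι) (U : ι → Set X), (∀ i, IsClopen (U i)) →
    (⋂ i, U i).Nonempty → (interior (⋂ i, U i)).Nonempty

section

variable {X : Type} [TopologicalSpace X]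

theorem nonempty_iInter_of_directed_nonempty_isClosed [CompactSpace X] [Nonempty X] {κ : Type*}
    {C : κ → Set X} (hdir : Directed (· ⊇ ·) C) (hne : ∀ i, (C i).Nonempty)
    (hcl : ∀ i, IsClosed (C i)) : (⋂ i, C i).Nonempty := by
  cases isEmpty_or_nonempty κ
  · simp
  · exact IsCompact.nonempty_iInter_of_directed_nonempty_isCompact_isClosed C hdir hne
      (fun i => (hcl i).isCompact) hcl

variable [TotallyDisconnectedSpace X] [CompactSpace X] [T2Space X]

theorem exists_isClopen_subset_inter_iInter
    (h : CountableClopenInterHasInterior X)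
    {κ : Type} [Countable κ] {C : κ → Set X} (hC : ∀ i, IsClopen (C i))
    (hCne : (⋂ i, C i).Nonempty) {D : Set X} (hD : IsOpen D) (hDd : Dense D) :
    ∃ S, IsClopen S ∧ S.Nonempty ∧ S ⊆ D ∩ ⋂ i, C i := by
  obtain ⟨x, hxC, hxD⟩ :=
    hDd.inter_open_nonempty _ isOpen_interior (h κ inferInstance C hC hCne)
  obtain ⟨S, hS, hxS, hSsub⟩ :=
    compact_exists_isClopen_in_isOpen (hD.inter isOpen_interior) ⟨hxD, hxC⟩
  exact ⟨S, hS, ⟨x, hxS⟩, hSsub.trans (inter_subset_inter_right _ interior_subset)⟩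

theorem nonempty_iInter_of_countable_Iio [Nonempty X]
    (h : CountableClopenInterHasInterior X)
    {ι : Type} [LinearOrder ι] [WellFoundedLT ι] (hι : ∀ i : ι, (Iio i).Countable)
    {V : ι → Set X} (hV : ∀ i, IsOpen (V i) ∧ Dense (V i)) : (⋂ i, V i).Nonempty := by
  obtain ⟨C, hC, hanti⟩ := WellFoundedLT.exists_antitone_of_forall_exists
      (fun (i : ι) (S : Set X) => IsClopen S ∧ S.Nonempty ∧ S ⊆ V i) fun a C hC hanti => by
    have : Countable (Iio a) := (hι a).to_subtype
    have hne : (⋂ b : ↥(Iio a), C b).Nonempty :=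
      nonempty_iInter_of_directed_nonempty_isClosed (antitoneOn_iff_antitone.1 hanti).directed_ge
        (fun b => (hC b b.2).2.1) fun b => (hC b b.2).1.isClosed
    obtain ⟨S, hS, hSne, hSsub⟩ :=
      exists_isClopen_subset_inter_iInter h (fun b : Iio a => (hC b b.2).1) hne (hV a).1 (hV a).2
    exact ⟨S, ⟨hS, hSne, hSsub.trans inter_subset_left⟩,
      fun b hb x hx => mem_iInter.1 (hSsub hx).2 ⟨b, hb⟩⟩
  obtain ⟨x, hx⟩ := nonempty_iInter_of_directed_nonempty_isClosed hanti.directed_ge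
    (fun i => (hC i).2.1) (fun i => (hC i).1.isClosed)
  exact ⟨x, mem_iInter.2 fun i => (hC i).2.2 (mem_iInter.1 hx i)⟩

end

theorem stmt_15 {X : Type} [TopologicalSpace X] [TotallyDisconnectedSpace X]
    [CompactSpace X] [T2Space X] [Nonempty X]
    (h : ∀ (ι : Type) (_ : Countable ι) (U : ι → Set X), (∀ i, IsClopen (U i)) →
      (⋂ i, U i).Nonempty → (interior (⋂ i, U i)).Nonempty)
    (ι : Type) (hι : Cardinal.mk ι ≤ Cardinal.aleph 1)
    (V : ι → Set X) (hV : ∀ i, IsOpen (V i) ∧ Dense (V i)) :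
    (⋂ i, V i).Nonempty := by
  obtain ⟨f⟩ : Nonempty (ι ↪ (ω₁).ToType) := by
    rwa [← Cardinal.le_def, mk_toType, card_omega]
  let : LinearOrder ι := LinearOrder.lift' f f.injective
  have : WellFoundedLT ι := ⟨InvImage.wf f wellFounded_lt⟩
  exact nonempty_iInter_of_countable_Iio h
    (fun i => (countable_Iio_omega_one (f i)).preimage f.injective) hV
end

section
/- Let $X$ be a totally disconnected compact Hausdorff space, $k$ a non-Archimedean valued field with non-trivial valuation, and suppose every prime ideal of the ring $C(X,k)$ of continuous $k$-valued functions is closed with respect to the supremum norm topology. If additionally every closed prime ideal of $C(X,k)$ is maximal and every maximal ideal is of the form $m_{k,x} = \{f : f(x) = 0\}$ for some $x \in X$, then $X$ is a finite set. -/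
/-!
If every prime of `C(X, k)` is maximal, then the maximal ideal of functions vanishing at a point `c`
is a minimal prime, so every `f` with `f c = 0` becomes nilpotent in the localisation there:
`s * f ^ n = 0` with `s c ≠ 0`, and `f` vanishes on a neighbourhood of `c`.
An infinite profinite space, however, has a strictly decreasing sequence of clopen sets `V n`;
`z ↦ sup {n | z ∈ V n}` is then a continuous map to `ℕ∞` hitting every `n : ℕ`, and composing it
with `n ↦ a ^ n`, `⊤ ↦ 0` for `0 < ‖a‖ < 1` gives a function vanishing at a cluster point of the
levels but on no neighbourhood of it.
-/

open Set Filter Topology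

/-- Evaluation of continuous functions at a point, as a ring homomorphism. -/
def cEvalHom (X k : Type*) [TopologicalSpace X] [NormedField k] (x : X) :
    ContinuousMap X k →+* k where
  toFun f := f x
  map_one' := rfl
  map_mul' _ _ := rfl
  map_zero' := rfl
  map_add' _ _ := rfl

theorem Ideal.exists_notMem_mul_pow_eq_zero_of_mem_minimalPrimes {R : Type*} [CommSemiring R]
    {p : Ideal R} (hp : p ∈ minimalPrimes R) {x : R} (hx : x ∈ p) :
    ∃ s ∉ p, ∃ n : ℕ, s * x ^ n = 0 := by
  have := hp.isPrime
  let S := Localization.AtPrime p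
  have := IsLocalization.subsingleton_primeSpectrum_of_mem_minimalPrimes p hp S
  have hnil : IsNilpotent (algebraMap R S x) := by
    refine nilpotent_iff_mem_prime.2 fun J hJ => ?_
    have : J = IsLocalRing.maximalIdeal S :=
      congrArg PrimeSpectrum.asIdeal (Subsingleton.elim ⟨J, hJ⟩ (IsLocalRing.closedPoint S))
    exact this ▸ (IsLocalization.AtPrime.to_map_mem_maximal_iff S p x).2 hx
  obtain ⟨n, hn⟩ := hnil
  rw [← map_pow, IsLocalization.map_eq_zero_iff p.primeCompl] at hn
  obtain ⟨⟨s, hs⟩, hsx⟩ := hn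
  exact ⟨s, hs, n, hsx⟩

theorem ContinuousMap.eventually_eq_zero_of_apply_eq_zero {X k : Type*} [TopologicalSpace X]
    [NormedField k] [Ring.KrullDimLE 0 C(X, k)] {f : C(X, k)} {c : X} (hf : f c = 0) :
    ∀ᶠ z in 𝓝 c, f z = 0 := by
  have : (RingHom.ker (cEvalHom X k c)).IsPrime := RingHom.ker_isPrime _
  obtain ⟨s, hs, n, hsf⟩ := Ideal.exists_notMem_mul_pow_eq_zero_of_mem_minimalPrimes
    (Ideal.mem_minimalPrimes_of_krullDimLE_zero _) (show f ∈ RingHom.ker (cEvalHom X k c) from hf)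
  filter_upwards [s.continuous.continuousAt.eventually_ne hs] with z hz
  have : s z * f z ^ n = 0 := congr($hsf z)
  exact eq_zero_of_pow_eq_zero ((mul_eq_zero.1 this).resolve_left hz)

theorem ENat.continuous_of_isClopen_natCast_le {X : Type*} [TopologicalSpace X] {d : X → ℕ∞}
    (hd : ∀ n : ℕ, IsClopen {z | (n : ℕ∞) ≤ d z}) : Continuous d := by
  refine continuous_iff_continuousAt.2 fun z => ?_
  cases hz : d z with
  | top =>
    rw [ContinuousAt, hz, ENat.tendsto_nhds_top_iff_natCast_lt]
    intro n
    filter_upwards [(hd (n + 1)).isOpen.mem_nhds (by simp [hz])] with w hw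
    exact (ENat.add_one_le_iff (ENat.natCast_ne_top n)).1 (by exact_mod_cast hw)
  | coe n =>
    rw [ContinuousAt, hz, ENat.nhds_natCast, tendsto_pure]
    filter_upwards [(hd n).isOpen.mem_nhds (by simp [hz]),
      (hd (n + 1)).compl.isOpen.mem_nhds
        (show ¬ ((n + 1 : ℕ) : ℕ∞) ≤ d z by rw [hz, Nat.cast_le]; omega)] with w hn hn'
    refine le_antisymm ?_ hn
    simpa [ENat.lt_add_one_iff (ENat.natCast_ne_top n)] using hn'

theorem ENat.continuous_ite_eq_top_pow {k : Type*} [SeminormedRing k] {a : k} (ha : ‖a‖ < 1) :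
    Continuous fun x : ℕ∞ => if x = ⊤ then 0 else a ^ x.toNat := by
  refine continuous_iff_continuousAt.2 fun x => ?_
  cases x with
  | top =>
    refine nhds_top_basis.tendsto_left_iff.2 fun U hU => ?_
    obtain ⟨N, hN⟩ := eventually_atTop.1 (tendsto_pow_atTop_nhds_zero_of_norm_lt_one ha hU)
    refine ⟨N, ENat.natCast_lt_top N, fun x hx => ?_⟩
    cases x with
    | top => simpa using mem_of_mem_nhds hU
    | coe m => simpa using hN m (by exact_mod_cast (mem_Ioi.1 hx).le)
  | coe n => rw [ContinuousAt, ENat.nhds_natCast]; exact tendsto_pure_nhds _ _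

theorem Antitone.natCast_le_iSup_mem_iff {X : Type*} {V : ℕ → Set X} (hV : Antitone V)
    (h0 : V 0 = univ) (n : ℕ) (z : X) :
    (n : ℕ∞) ≤ ⨆ (m : ℕ) (_ : z ∈ V m), (m : ℕ∞) ↔ z ∈ V n := by
  refine ⟨fun h => ?_, fun h => le_iSup₂ (f := fun m (_ : z ∈ V m) => (m : ℕ∞)) n h⟩
  by_contra hn
  obtain ⟨n, rfl⟩ : ∃ m, n = m + 1 :=
    Nat.exists_eq_succ_of_ne_zero (by rintro rfl; exact hn (h0 ▸ mem_univ z))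
  have hle : ⨆ (m : ℕ) (_ : z ∈ V m), (m : ℕ∞) ≤ n :=
    iSup₂_le fun m hm => Nat.cast_le.2 (by by_contra! hlt; exact hn (hV hlt hm))
  have := h.trans hle
  norm_cast at this
  omega

section Profinite

variable {X : Type*} [TopologicalSpace X] [TotallyDisconnectedSpace X] [CompactSpace X]
  [T2Space X]

theorem IsClopen.exists_infinite_isClopen_ssubset {V : Set X} (hV : IsClopen V)
    (hinf : V.Infinite) : ∃ W, IsClopen W ∧ W.Infinite ∧ W ⊂ V := by
  obtain ⟨u, hu, v, hv, huv⟩ := hinf.nontrivial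
  obtain ⟨W, hW, huW, hWV⟩ := isTopologicalBasis_isClopen.exists_subset_of_mem_open
    (show u ∈ V \ {v} from ⟨hu, huv⟩) (hV.isOpen.sdiff isClosed_singleton)
  have hWV' : W ⊆ V := hWV.trans sdiff_subset
  rcases infinite_union.1 ((union_sdiff_cancel hWV').symm ▸ hinf) with hWinf | hWinf
  · exact ⟨W, hW, hWinf, (ssubset_iff_of_subset hWV').2 ⟨v, hv, fun hvW => (hWV hvW).2 rfl⟩⟩
  · exact ⟨V \ W, hV.diff hW, hWinf,
      (ssubset_iff_of_subset sdiff_subset).2 ⟨u, hu, fun huW' => huW'.2 huW⟩⟩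

variable (X) in
theorem exists_strictAnti_isClopen [Infinite X] :
    ∃ V : ℕ → Set X, StrictAnti V ∧ V 0 = univ ∧ ∀ n, IsClopen (V n) := by
  choose! shrink hshrink using fun (V : Set X) (hV : IsClopen V) (hinf : V.Infinite) =>
    hV.exists_infinite_isClopen_ssubset hinf
  have hV : ∀ n, IsClopen (shrink^[n] univ) ∧ (shrink^[n] univ).Infinite := by
    intro n
    induction n with
    | zero => exact ⟨isClopen_univ, infinite_univ⟩
    | succ n ih =>
      rw [Function.iterate_succ_apply']
      exact ⟨(hshrink _ ih.1 ih.2).1, (hshrink _ ih.1 ih.2).2.1⟩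
  refine ⟨fun n => shrink^[n] univ, strictAnti_nat_of_succ_lt fun n => ?_, rfl, fun n => (hV n).1⟩
  rw [Function.iterate_succ_apply']
  exact (hshrink _ (hV n).1 (hV n).2).2.2

variable (X) in
theorem exists_continuous_enat_natCast_mem_range [Infinite X] :
    ∃ d : X → ℕ∞, Continuous d ∧ ∀ n : ℕ, (n : ℕ∞) ∈ range d := by
  obtain ⟨V, hanti, h0, hclopen⟩ := exists_strictAnti_isClopen X
  have hd := hanti.antitone.natCast_le_iSup_mem_iff h0
  refine ⟨fun z => ⨆ (m : ℕ) (_ : z ∈ V m), (m : ℕ∞), ENat.continuous_of_isClopen_natCast_le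
    fun n => by simpa only [hd, ofPred_mem_eq] using hclopen n, fun n => ?_⟩
  obtain ⟨z, hz, hz'⟩ := exists_of_ssubset (hanti n.lt_succ_self)
  refine ⟨z, le_antisymm ?_ ((hd n z).2 hz)⟩
  rw [← hd (n + 1)] at hz'
  push_cast at hz'
  exact (ENat.lt_add_one_iff (ENat.natCast_ne_top n)).1 (not_le.1 hz')

theorem exists_continuousMap_apply_eq_zero_frequently_ne_zero [Infinite X] {k : Type*}
    [NormedRing k] [NoZeroDivisors k] {a : k} (ha0 : a ≠ 0) (ha1 : ‖a‖ < 1) :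
    ∃ (f : C(X, k)) (c : X), f c = 0 ∧ ∃ᶠ z in 𝓝 c, f z ≠ 0 := by
  obtain ⟨d, hd, hrange⟩ := exists_continuous_enat_natCast_mem_range X
  choose y hy using hrange
  obtain ⟨c, hc⟩ := exists_clusterPt_of_compactSpace (map y atTop)
  have hdc : d c = ⊤ := by
    have hdy : MapClusterPt (d c) atTop (d ∘ y) := MapClusterPt.tendsto_comp hd.continuousAt hc
    rw [show d ∘ y = Nat.cast from funext hy] at hdy
    exact eq_of_nhds_neBot (hdy.clusterPt.mono ENat.tendsto_natCast_nhds_top)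
  refine ⟨⟨_, (ENat.continuous_ite_eq_top_pow ha1).comp hd⟩, c, by simp [hdc],
    frequently_iff.2 fun {U} hU => ?_⟩
  obtain ⟨n, hn⟩ := (mapClusterPt_iff_frequently.1 hc U hU).exists
  exact ⟨y n, hn, by simpa [hy n] using pow_ne_zero n ha0⟩

end Profinite

theorem stmt_17_general {X k : Type*} [TopologicalSpace X] [TotallyDisconnectedSpace X]
    [CompactSpace X] [T2Space X] [NormedField k]
    (hk : ∃ a : k, 0 < ‖a‖ ∧ ‖a‖ < 1)
    (hclosed : ∀ p : Ideal (ContinuousMap X k), p.IsPrime →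
      IsClosed (p : Set (ContinuousMap X k)))
    (hmax : ∀ p : Ideal (ContinuousMap X k), p.IsPrime →
      IsClosed (p : Set (ContinuousMap X k)) → p.IsMaximal) :
    Finite X := by
  by_contra hfin
  have : Infinite X := not_finite_iff_infinite.1 hfin
  have : Ring.KrullDimLE 0 C(X, k) := .mk₀ fun p hp => hmax p hp (hclosed p hp)
  obtain ⟨a, ha0, ha1⟩ := hk
  obtain ⟨f, c, hfc, hf⟩ :=
    exists_continuousMap_apply_eq_zero_frequently_ne_zero (X := X) (norm_pos_iff.1 ha0) ha1
  obtain ⟨z, hfz, hfz'⟩ :=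
    (hf.and_eventually (ContinuousMap.eventually_eq_zero_of_apply_eq_zero hfc)).exists
  exact hfz hfz'

theorem stmt_17 {X k : Type*} [TopologicalSpace X] [TotallyDisconnectedSpace X]
    [CompactSpace X] [T2Space X] [NormedField k] [IsUltrametricDist k]
    (hk : ∃ a : k, 0 < ‖a‖ ∧ ‖a‖ < 1)
    (hclosed : ∀ p : Ideal (ContinuousMap X k), p.IsPrime →
      IsClosed (p : Set (ContinuousMap X k)))
    (hmax : ∀ p : Ideal (ContinuousMap X k), p.IsPrime →
      IsClosed (p : Set (ContinuousMap X k)) → p.IsMaximal)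
    (heval : ∀ m : Ideal (ContinuousMap X k), m.IsMaximal →
      ∃ x : X, m = RingHom.ker (cEvalHom X k x)) :
    Finite X :=
  stmt_17_general hk hclosed hmax
end

section
/- Let $X$ be a non-empty totally disconnected compact Hausdorff space in which every point is a P-point, and let $k$ be a non-Archimedean valued field with non-trivial valuation. Then every bounded continuous function $f \colon X \to k$ has finite image. -/
open Filter Topology

namespace IsPPoint

variable {X Y : Type*} [TopologicalSpace X] [TopologicalSpace Y] {x : X}

theorem iInter_mem_nhds {ι : Sort*} [Countable ι] (hx : IsPPoint x) {U : ι → Set X}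
    (hU : ∀ i, U i ∈ 𝓝 x) : ⋂ i, U i ∈ 𝓝 x := by
  rw [← Set.sInter_range]
  exact hx _ (Set.countable_range U) (Set.forall_mem_range.2 hU)

theorem eventually_eq_of_continuousAt_s18 [T1Space Y] [FirstCountableTopology Y] (hx : IsPPoint x)
    {f : X → Y} (hf : ContinuousAt f x) : ∀ᶠ y in 𝓝 x, f y = f x := by
  obtain ⟨V, hV⟩ := (𝓝 (f x)).exists_antitone_basis
  have hker : ⋂ i, V i = {f x} := by
    rw [← ker_nhds (f x), hV.ker]
    simp only [Set.iInter_true]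
  have h := hx.iInter_mem_nhds fun i => hf.preimage_mem_nhds (hV.mem i)
  rwa [← Set.preimage_iInter, hker] at h

end IsPPoint

theorem Continuous.isLocallyConstant_of_forall_isPPoint {X Y : Type*} [TopologicalSpace X]
    [TopologicalSpace Y] [T1Space Y] [FirstCountableTopology Y] (hP : ∀ x : X, IsPPoint x)
    {f : X → Y} (hf : Continuous f) : IsLocallyConstant f :=
  (IsLocallyConstant.iff_eventually_eq f).2 fun x =>
    (hP x).eventually_eq_of_continuousAt_s18 hf.continuousAt

theorem stmt_18_general {X k : Type*} [TopologicalSpace X] [CompactSpace X] [NormedField k]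
    (hP : ∀ x : X, IsPPoint x) (f : X → k) (hf : Continuous f) :
    (Set.range f).Finite :=
  (hf.isLocallyConstant_of_forall_isPPoint hP).range_finite

theorem stmt_18 {X k : Type*} [TopologicalSpace X] [TotallyDisconnectedSpace X]
    [CompactSpace X] [T2Space X] [Nonempty X] [NormedField k] [IsUltrametricDist k]
    (hk : ∃ a : k, 0 < ‖a‖ ∧ ‖a‖ < 1) (hP : ∀ x : X, IsPPoint x)
    (f : X → k) (hf : Continuous f) (hb : ∃ C : ℝ, ∀ x, ‖f x‖ ≤ C) :
    (Set.range f).Finite :=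
  stmt_18_general hP f hf
end
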